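/- arXiv:1410.5803 — 2 statements merged into one kernel-verified Lean document; each statement's English description precedes it below -/
import Mathlib

section
/- For every positive integer M, the following identity of rational functions in t, w, q holds: ((1-q^2)(1-q^M)/((1-t*q^2)(1-w*q^M))) * (1 + q^2/(1-q) + q^6/((1-q)(1-q^2))) = 1 + q^2*(t+q)/(1-t*q^2) + (q^6/((1-t*q^2)(1-w*q^M))) * ([M]_q + (w-1)*(q^{M-3} + q^{M-6})), where [M]_q = 1+q+\cdots+q^{M-1}. -/
/-!
With `Q = q^M` one has `[M]_q = (1 - Q)/(1 - q)`, `q^(M-3) = Q/q^3` and `q^(M-6) = Q/q^6`, so the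
claim is an identity between rational functions of `q, t, w, Q` that holds with `Q` arbitrary: after
clearing denominators it is a polynomial identity. The denominators `q`, `1 - q`, `1 - q^2`,
`1 - t q^2`, `1 - w q^M` do not vanish in `ℚ(t, w, q)`, being images of polynomials that are
nonzero at some point.
-/

noncomputable section

open MvPolynomial Finset

/-- The field of rational functions in `t`, `w` and `q` over `ℚ`. -/
abbrev F : Type := FractionRing (MvPolynomial (Fin 3) ℚ)

def t : F := algebraMap (MvPolynomial (Fin 3) ℚ) F (X 0)
def w : F := algebraMap (MvPolynomial (Fin 3) ℚ) F (X 1)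
def q : F := algebraMap (MvPolynomial (Fin 3) ℚ) F (X 2)

theorem geom_sum_eq_one_sub_div {K : Type*} [Field K] {x : K} (h : 1 - x ≠ 0) (n : ℕ) :
    ∑ i ∈ range n, x ^ i = (1 - x ^ n) / (1 - x) :=
  eq_div_of_mul_eq h (geom_sum_mul_neg x n)

theorem algebraMap_ne_zero_of_eval_ne_zero {σ R K : Type*} [CommRing R] [CommRing K]
    [Algebra (MvPolynomial σ R) K] [IsFractionRing (MvPolynomial σ R) K]
    {p : MvPolynomial σ R} (x : σ → R) (hp : eval x p ≠ 0) :
    algebraMap (MvPolynomial σ R) K p ≠ 0 :=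
  (map_ne_zero_iff _ (IsFractionRing.injective _ K)).mpr fun h ↦ hp (by rw [h, map_zero])

theorem one_sub_algebraMap_ne_zero {σ R K : Type*} [CommRing R] [Nontrivial R] [CommRing K]
    [Algebra (MvPolynomial σ R) K] [IsFractionRing (MvPolynomial σ R) K]
    {p : MvPolynomial σ R} (hp : constantCoeff p = 0) :
    1 - algebraMap (MvPolynomial σ R) K p ≠ 0 := by
  rw [← map_one (algebraMap (MvPolynomial σ R) K), ← map_sub]
  refine algebraMap_ne_zero_of_eval_ne_zero 0 ?_
  simp [eval, hp]

theorem parts_two_and_M_identity {K : Type*} [Field K] {q t w Q : K} (hq : q ≠ 0)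
    (h1 : 1 - q ≠ 0) (h2 : 1 - q ^ 2 ≠ 0) (ht : 1 - t * q ^ 2 ≠ 0) (hw : 1 - w * Q ≠ 0) :
    ((1 - q ^ 2) * (1 - Q) / ((1 - t * q ^ 2) * (1 - w * Q))) *
        (1 + q ^ 2 / (1 - q) + q ^ 6 / ((1 - q) * (1 - q ^ 2)))
      = 1 + q ^ 2 * (t + q) / (1 - t * q ^ 2)
        + (q ^ 6 / ((1 - t * q ^ 2) * (1 - w * Q))) *
          ((1 - Q) / (1 - q) + (w - 1) * (Q / q ^ 3 + Q / q ^ 6)) := by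
  -- `field_simp` looks for the denominators in its own normal form
  have ht' : 1 - q ^ 2 * t ≠ 0 := by rwa [mul_comm]
  have hw' : 1 - Q * w ≠ 0 := by rwa [mul_comm]
  field_simp
  ring

theorem stmt3_general (M : ℕ) :
    ((1 - q ^ 2) * (1 - q ^ M) / ((1 - t * q ^ 2) * (1 - w * q ^ M))) *
        (1 + q ^ 2 / (1 - q) + q ^ 6 / ((1 - q) * (1 - q ^ 2)))
      = 1 + q ^ 2 * (t + q) / (1 - t * q ^ 2)
        + (q ^ 6 / ((1 - t * q ^ 2) * (1 - w * q ^ M))) *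
          ((∑ i ∈ range M, q ^ i) +
            (w - 1) * (q ^ ((M : ℤ) - 3) + q ^ ((M : ℤ) - 6))) := by
  have one_sub_ne_zero {p : MvPolynomial (Fin 3) ℚ} (hp : constantCoeff p = 0) :
      1 - algebraMap _ F p ≠ 0 :=
    one_sub_algebraMap_ne_zero hp
  have hq : q ≠ 0 := algebraMap_ne_zero_of_eval_ne_zero 1 (by simp)
  have h1 : 1 - q ≠ 0 := one_sub_ne_zero (by simp)
  have h2 : 1 - q ^ 2 ≠ 0 := by
    have := one_sub_ne_zero (p := X 2 ^ 2) (by simp)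
    rwa [map_pow] at this
  have ht : 1 - t * q ^ 2 ≠ 0 := by
    have := one_sub_ne_zero (p := X 0 * X 2 ^ 2) (by simp)
    rwa [map_mul, map_pow] at this
  have hw : 1 - w * q ^ M ≠ 0 := by
    have := one_sub_ne_zero (p := X 1 * X 2 ^ M) (by simp)
    rwa [map_mul, map_pow] at this
  rw [geom_sum_eq_one_sub_div h1, zpow_sub₀ hq, zpow_sub₀ hq, zpow_natCast]
  exact parts_two_and_M_identity hq h1 h2 ht hw

/-- Proposition on parts 2 and M: the exponents `M-3`, `M-6` are interpreted as
integer powers in the rational function field. -/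
theorem stmt3 (M : ℕ) (hM : 1 ≤ M) :
    ((1 - q ^ 2) * (1 - q ^ M) / ((1 - t * q ^ 2) * (1 - w * q ^ M))) *
        (1 + q ^ 2 / (1 - q) + q ^ 6 / ((1 - q) * (1 - q ^ 2)))
      = 1 + q ^ 2 * (t + q) / (1 - t * q ^ 2)
        + (q ^ 6 / ((1 - t * q ^ 2) * (1 - w * q ^ M))) *
          ((∑ i ∈ range M, q ^ i) +
            (w - 1) * (q ^ ((M : ℤ) - 3) + q ^ ((M : ℤ) - 6))) :=
  stmt3_general M

end
end

section
/- The following identity of rational functions in t, w, q holds: 1 + q^2*(t+w*q)/(1-t*q^2) + q^6*(w^2+q+q^2)/((1-t*q^2)(1-w*q^3)) = ((1-q^2)(1-q^3)/((1-t*q^2)(1-w*q^3))) * (1 + q^2/(1-q) + q^6/((1-q)(1-q^2))). -/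
noncomputable section

open MvPolynomial

theorem MvPolynomial.one_sub_algebraMap_ne_zero_of_constantCoeff_eq_zero {σ R : Type*}
    (K : Type*) [CommRing R] [Nontrivial R] [CommRing K] [Algebra (MvPolynomial σ R) K]
    [IsFractionRing (MvPolynomial σ R) K] (p : MvPolynomial σ R) (hp : constantCoeff p = 0) :
    1 - algebraMap (MvPolynomial σ R) K p ≠ 0 := by
  rw [← map_one (algebraMap (MvPolynomial σ R) K), ← map_sub, Ne,
    IsFractionRing.to_map_eq_zero_iff]
  exact ne_of_apply_ne constantCoeff (by simp [hp])

theorem stmt16 :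
    1 + q ^ 2 * (t + w * q) / (1 - t * q ^ 2)
        + q ^ 6 * (w ^ 2 + q + q ^ 2) / ((1 - t * q ^ 2) * (1 - w * q ^ 3))
      = ((1 - q ^ 2) * (1 - q ^ 3) / ((1 - t * q ^ 2) * (1 - w * q ^ 3))) *
          (1 + q ^ 2 / (1 - q) + q ^ 6 / ((1 - q) * (1 - q ^ 2))) := by
  -- The factors are written as `field_simp` normalizes the denominators, so that it finds them.
  have ht : 1 - q ^ 2 * t ≠ 0 := by
    rw [show q ^ 2 * t = algebraMap _ F (X 2 ^ 2 * X 0 : MvPolynomial (Fin 3) ℚ) by simp [t, q]]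
    exact one_sub_algebraMap_ne_zero_of_constantCoeff_eq_zero F _ (by simp)
  have hw : 1 - q ^ 3 * w ≠ 0 := by
    rw [show q ^ 3 * w = algebraMap _ F (X 2 ^ 3 * X 1 : MvPolynomial (Fin 3) ℚ) by simp [w, q]]
    exact one_sub_algebraMap_ne_zero_of_constantCoeff_eq_zero F _ (by simp)
  have hq : 1 - q ≠ 0 :=
    one_sub_algebraMap_ne_zero_of_constantCoeff_eq_zero F _ (constantCoeff_X ℚ 2)
  have hq2 : 1 - q ^ 2 ≠ 0 := by
    rw [show q ^ 2 = algebraMap _ F (X 2 ^ 2 : MvPolynomial (Fin 3) ℚ) by simp [q]]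
    exact one_sub_algebraMap_ne_zero_of_constantCoeff_eq_zero F _ (by simp)
  field_simp
  ring

end
end
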